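/- The linear span of the set of radial compactly supported functions $\mathcal{A} = \{ z \mapsto g(|z - c|) : g\in C_c(\mathbb{R}),\ c\in\mathbb{C} \}$ is dense in $C_c(\mathbb{C})$ with respect to uniform convergence. -/

import Mathlib

open MeasureTheory Filter Matrix

noncomputable def singVals {n : ℕ} (A : Matrix (Fin n) (Fin n) ℂ) : Fin n → ℝ :=
  fun i => Real.sqrt ((Matrix.isHermitian_conjTranspose_mul_self A).eigenvalues i)

/-- `A ∼_σ k` on the domain `Dset`: singular value distribution. -/
def SingSymb {α : Type*} [MeasureSpace α] (Dset : Set α)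
    (A : ∀ n : ℕ, Matrix (Fin n) (Fin n) ℂ) (k : α → ℂ) : Prop :=
  ∀ F : C(ℝ, ℂ), HasCompactSupport F →
    Tendsto (fun n : ℕ => (n : ℂ)⁻¹ * ∑ i, F (singVals (A n) i)) atTop
      (nhds (((volume Dset).toReal)⁻¹ • ∫ x in Dset, F (‖k x‖)))

/-- `A ∼_λ k` on the domain `Dset`: eigenvalue (Weyl) distribution, where the
eigenvalues of `A n` (with multiplicity) are the roots of its characteristic polynomial. -/
def SpecSymb {α : Type*} [MeasureSpace α] (Dset : Set α)
    (A : ∀ n : ℕ, Matrix (Fin n) (Fin n) ℂ) (k : α → ℂ) : Prop :=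
  ∀ F : C(ℂ, ℂ), HasCompactSupport F →
    Tendsto (fun n : ℕ =>
        (n : ℂ)⁻¹ * (Multiset.map (fun z => F z) (A n).charpoly.roots).sum) atTop
      (nhds (((volume Dset).toReal)⁻¹ • ∫ x in Dset, F (k x)))

/-- Zero-distributed sequence: `A ∼_σ 0`. -/
def ZeroDist (A : ∀ n : ℕ, Matrix (Fin n) (Fin n) ℂ) : Prop :=
  ∀ F : C(ℝ, ℂ), HasCompactSupport F →
    Tendsto (fun n : ℕ => (n : ℂ)⁻¹ * ∑ i, F (singVals (A n) i)) atTop (nhds (F 0))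

/-!
Mollify `F` by a radial approximate identity `k(‖x‖)`: since `F` is uniformly continuous, the
convolution `∫ F(c) k(‖z - c‖) dc` is uniformly close to `F`. Read in the Banach space `ℂ →ᵇ ℂ`,
this convolution is the Bochner integral of the radial bumps `c ↦ F(c) k(‖· - c‖)`, and an
integral of vectors of a closed subspace stays in it, so it lies in the closed span of the radial
bumps.
-/

open Metric Function
open scoped CompactlySupported BoundedContinuousFunction Convolution

theorem Submodule.integral_mem_of_isClosed {α X : Type*} [MeasurableSpace α] {μ : Measure α}
    [NormedAddCommGroup X] [NormedSpace ℝ X] [CompleteSpace X] {p : Submodule ℝ X}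
    (hp : IsClosed (p : Set X)) {f : α → X} (hf : ∀ a, f a ∈ p) : ∫ a, f a ∂μ ∈ p := by
  have : IsClosed (p : Set X) := hp
  by_cases hfi : Integrable f μ
  · simpa [(Submodule.Quotient.mk_eq_zero p).2 (hf _)] using (p.mkQL.integral_comp_comm hfi).symm
  · simp [integral_undef hfi, p.zero_mem]

namespace CompactlySupportedContinuousMap

variable {E β : Type*} [SeminormedAddCommGroup E] [PseudoMetricSpace β] [Zero β]

def radial (g : C_c(ℝ, β)) (c : E) : E →ᵇ β :=
  g.toBoundedContinuousFunction.compContinuous ⟨fun z => ‖z - c‖, by fun_prop⟩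

@[simp]
theorem radial_apply (g : C_c(ℝ, β)) (c z : E) : g.radial c z = g ‖z - c‖ := rfl

theorem uniformContinuous_radial (g : C_c(ℝ, β)) :
    UniformContinuous (g.radial : E → E →ᵇ β) := by
  refine Metric.uniformContinuous_iff.2 fun ε hε => ?_
  obtain ⟨δ, hδ, hg⟩ := Metric.uniformContinuous_iff.1
    (CompactlySupportedContinuousMapClass.uniformContinuous g) (ε / 2) (half_pos hε)
  refine ⟨δ, hδ, fun {a b} hab => ?_⟩
  refine ((BoundedContinuousFunction.dist_le (half_pos hε).le).2 fun z => (hg ?_).le).trans_lt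
    (half_lt_self hε)
  calc dist ‖z - a‖ ‖z - b‖ ≤ ‖(z - a) - (z - b)‖ := dist_norm_norm_le _ _
    _ = dist a b := by rw [sub_sub_sub_cancel_left, dist_comm, dist_eq_norm]
    _ < δ := hab

end CompactlySupportedContinuousMap

def radialBumps (E : Type*) [SeminormedAddCommGroup E] : Set (E →ᵇ ℂ) :=
  {f | ∃ (g : C_c(ℝ, ℂ)) (c : E), g.radial c = f}

section FiniteDimensional

variable {E : Type*} [NormedAddCommGroup E] [NormedSpace ℝ E] [FiniteDimensional ℝ E]
  [MeasurableSpace E] [BorelSpace E]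

theorem exists_radial_approxIdentity (μ : Measure E) [μ.IsAddHaarMeasure] {δ : ℝ} (hδ : 0 < δ) :
    ∃ k : C_c(ℝ, ℝ), (∀ r, 0 ≤ k r) ∧ support (fun x : E => k ‖x‖) ⊆ ball 0 δ ∧
      ∫ x, k ‖x‖ ∂μ = 1 := by
  let tent : C_c(ℝ, ℝ) :=
    ⟨⟨fun r => max 0 (δ - |r|), by fun_prop⟩, by
      refine HasCompactSupport.intro (isCompact_closedBall 0 δ) fun r hr => ?_
      simp only [mem_closedBall, Real.dist_eq, sub_zero, not_le] at hr ⊢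
      exact max_eq_left (by linarith)⟩
  have tent_apply (r : ℝ) : tent r = max 0 (δ - |r|) := rfl
  have tent_nonneg (r : ℝ) : 0 ≤ tent r := le_max_left _ _
  have support_tent : support (fun x : E => tent ‖x‖) = ball 0 δ := by
    ext x
    simp [tent_apply, abs_norm]
  have hK : 0 < ∫ x, tent ‖x‖ ∂μ := by
    have hint : Integrable (fun x : E => tent ‖x‖) μ :=
      (tent.continuous.comp continuous_norm).integrable_of_hasCompactSupport
        (HasCompactSupport.intro (isCompact_closedBall 0 δ) fun x hx =>
          notMem_support.1 fun h => hx (ball_subset_closedBall (support_tent ▸ h)))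
    rw [integral_pos_iff_support_of_nonneg (fun x => tent_nonneg _) hint, support_tent]
    exact measure_ball_pos μ 0 hδ
  refine ⟨(∫ x, tent ‖x‖ ∂μ)⁻¹ • tent, fun r => ?_, ?_, ?_⟩
  · simp only [CompactlySupportedContinuousMap.smul_apply, smul_eq_mul]
    exact mul_nonneg (inv_nonneg.2 hK.le) (tent_nonneg _)
  · simp only [CompactlySupportedContinuousMap.smul_apply, smul_eq_mul]
    exact support_tent ▸ support_mul_subset_right _ _
  · simp only [CompactlySupportedContinuousMap.smul_apply, smul_eq_mul]
    rw [integral_const_mul, inv_mul_cancel₀ hK.ne']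

theorem integral_smul_radial_apply (μ : Measure E) [μ.IsAddHaarMeasure] (F : C_c(E, ℂ))
    (k : C_c(ℝ, ℝ)) (z : E) :
    (∫ c, F c • (k.compLeft (Complex.ofRealCLM : C(ℝ, ℂ))).radial c ∂μ) z =
      ((fun x => k ‖x‖) ⋆[ContinuousLinearMap.lsmul ℝ ℝ, μ] F) z := by
  set g := k.compLeft (Complex.ofRealCLM : C(ℝ, ℂ))
  have hint : Integrable (fun c => F c • g.radial c) μ :=
    (F.continuous.smul g.uniformContinuous_radial.continuous).integrable_of_hasCompactSupport
      F.hasCompactSupport.smul_right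
  rw [← BoundedContinuousFunction.evalCLM_apply ℂ z,
    ← (BoundedContinuousFunction.evalCLM ℂ z).integral_comp_comm hint, convolution_lsmul_swap]
  congr 1 with c
  rw [BoundedContinuousFunction.evalCLM_apply, BoundedContinuousFunction.smul_apply,
    CompactlySupportedContinuousMap.radial_apply,
    CompactlySupportedContinuousMap.compLeft_apply Complex.ofReal_zero]
  simp [Complex.real_smul, mul_comm]

theorem mem_closure_span_radialBumps (F : C_c(E, ℂ)) :
    F.toBoundedContinuousFunction ∈ closure (Submodule.span ℂ (radialBumps E) : Set (E →ᵇ ℂ)) := by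
  set V := Submodule.span ℂ (radialBumps E)
  rw [← closure_closure, ← Submodule.topologicalClosure_coe]
  refine Metric.mem_closure_iff.2 fun η hη => ?_
  obtain ⟨δ, hδ, hFδ⟩ := Metric.uniformContinuous_iff.1
    (CompactlySupportedContinuousMapClass.uniformContinuous F) (η / 2) (half_pos hη)
  obtain ⟨k, hk_nonneg, hk_supp, hk_int⟩ :=
    exists_radial_approxIdentity (Measure.addHaar : Measure E) hδ
  set g := k.compLeft (Complex.ofRealCLM : C(ℝ, ℂ))
  have mem_closure_span (c : E) : F c • g.radial c ∈ V.topologicalClosure.restrictScalars ℝ :=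
    V.le_topologicalClosure (V.smul_mem _ (Submodule.subset_span ⟨g, c, rfl⟩))
  refine ⟨∫ c, F c • g.radial c ∂Measure.addHaar,
    Submodule.integral_mem_of_isClosed V.isClosed_topologicalClosure mem_closure_span, ?_⟩
  refine ((BoundedContinuousFunction.dist_le (half_pos hη).le).2 fun z => ?_).trans_lt
    (half_lt_self hη)
  rw [integral_smul_radial_apply, dist_comm]
  exact dist_convolution_le (half_pos hη).le hk_supp (fun x => hk_nonneg _) hk_int
    F.continuous.aestronglyMeasurable fun x hx => (hFδ hx).le

end FiniteDimensional

/-- Linear combinations of radial compactly supported functions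
`z ↦ g(|z - c|)` are dense in `C_c(ℂ)` for the uniform norm. -/
theorem radial_span_dense (F : C(ℂ, ℂ)) (hF : HasCompactSupport F)
    (ε : ℝ) (hε : 0 < ε) :
    ∃ (N : ℕ) (coef : Fin N → ℂ) (c : Fin N → ℂ) (g : Fin N → C(ℝ, ℂ)),
      (∀ i, HasCompactSupport (g i)) ∧
      ∀ z : ℂ, ‖F z - ∑ i, coef i * g i (‖z - c i‖)‖ ≤ ε := by
  obtain ⟨v, hv, hFv⟩ := Metric.mem_closure_iff.1
    (mem_closure_span_radialBumps (⟨F, hF⟩ : C_c(ℂ, ℂ))) ε hε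
  obtain ⟨N, coef, bump, rfl⟩ := Submodule.mem_span_set'.1 hv
  choose g c hgc using fun i => (bump i).2
  refine ⟨N, coef, c, fun i => g i, fun i => (g i).hasCompactSupport, fun z => ?_⟩
  calc ‖F z - ∑ i, coef i * g i ‖z - c i‖‖
      = dist ((⟨F, hF⟩ : C_c(ℂ, ℂ)).toBoundedContinuousFunction z)
          ((∑ i, coef i • (bump i : ℂ →ᵇ ℂ)) z) := by
        simp [dist_eq_norm, ← hgc]
    _ ≤ ε := (BoundedContinuousFunction.dist_coe_le_dist z).trans hFv.le
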